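/- Let V be a real quadratic space, W ⊂ V finite with the cone 𝒞(W) = {v : ∀w∈W, ⟨v,w⟩ ≥ 0} non-degenerate (nonempty interior) and non-negative (no vectors of negative norm). Suppose v ∈ 𝒞(W) is a nonzero isotropic vector and E = {w ∈ W : ⟨v,w⟩ = 0} is maximal among subsets of W with v ∈ E^⊥. If #E < d⁻ and E^⊥ contains a vector v' with q(v') < 0 and ⟨v,v'⟩ ≠ 0, then for small t of sign opposite to ⟨v,v'⟩, the vector v + t v' lies in 𝒞(W) and has q(v + t v') < 0, contradicting non-negativity. -/
import Mathlib


noncomputable section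

/-- The standard bilinear form of signature `(dp, dn)` on `ℝ^{dp} ⊕ ℝ^{dn}`
(this realizes a real quadratic space of signature `(d⁺, d⁻)`). -/
def sigB {dp dn : ℕ} (v w : (Fin dp ⊕ Fin dn) → ℝ) : ℝ :=
  ∑ i : Fin dp, v (Sum.inl i) * w (Sum.inl i) - ∑ j : Fin dn, v (Sum.inr j) * w (Sum.inr j)

/-- The associated quadratic form, normalized so that `⟨l,l'⟩ = q(l+l') − q(l) − q(l')`,
i.e. `q v = ½⟨v,v⟩`. -/
def sigQ {dp dn : ℕ} (v : (Fin dp ⊕ Fin dn) → ℝ) : ℝ := sigB v v / 2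

/-- The polyhedral cone `𝒞(W) = {v : ∀ w ∈ W, ⟨v,w⟩ ≥ 0}` with walls `W`. -/
def polyCone {dp dn : ℕ} (W : Finset ((Fin dp ⊕ Fin dn) → ℝ)) :
    Set ((Fin dp ⊕ Fin dn) → ℝ) :=
  {v | ∀ w ∈ W, 0 ≤ sigB v w}

lemma sigB_add_left {dp dn : ℕ} (u v w : (Fin dp ⊕ Fin dn) → ℝ) :
    sigB (u + v) w = sigB u w + sigB v w := by
  simp only [sigB, Pi.add_apply, add_mul, Finset.sum_add_distrib]; ring

lemma sigB_smul_left {dp dn : ℕ} (t : ℝ) (v w : (Fin dp ⊕ Fin dn) → ℝ) :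
    sigB (t • v) w = t * sigB v w := by
  simp only [sigB, Pi.smul_apply, smul_eq_mul, mul_assoc, ← Finset.mul_sum, mul_sub]

lemma sigB_comm {dp dn : ℕ} (v w : (Fin dp ⊕ Fin dn) → ℝ) :
    sigB v w = sigB w v := by
  simp only [sigB, mul_comm]

/-- inductive step of Lemma 2.3: let `𝒞(W)` be non-degenerate and
non-negative, `v ∈ 𝒞(W)` nonzero isotropic, `E = {w ∈ W : ⟨v,w⟩ = 0}`, `#E < d⁻`, and
`v' ∈ E^⊥` with `q(v') < 0` and `⟨v,v'⟩ ≠ 0`.  Then for (small) `t` of sign opposite to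
`⟨v,v'⟩` the vector `v + t·v'` lies in `𝒞(W)` and has `q(v + t·v') < 0`. -/
theorem isotropic_edge_inductive_step (dp dn : ℕ)
    (W : Finset ((Fin dp ⊕ Fin dn) → ℝ))
    (hint : (interior (polyCone W)).Nonempty)
    (hnonneg : ∀ u ∈ polyCone W, 0 ≤ sigQ u)
    (v : (Fin dp ⊕ Fin dn) → ℝ) (hv : v ∈ polyCone W) (hv0 : v ≠ 0) (hviso : sigQ v = 0)
    (E : Finset ((Fin dp ⊕ Fin dn) → ℝ))
    (hE : ∀ w, w ∈ E ↔ w ∈ W ∧ sigB v w = 0)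
    (hcard : E.card < dn)
    (v' : (Fin dp ⊕ Fin dn) → ℝ)
    (hv'E : ∀ w ∈ E, sigB v' w = 0)
    (hv'neg : sigQ v' < 0) (hvv' : sigB v v' ≠ 0) :
    ∃ t : ℝ, t ≠ 0 ∧ t * sigB v v' < 0 ∧
      v + t • v' ∈ polyCone W ∧ sigQ (v + t • v') < 0 := by

  classical
  set c := sigB v v' with hc
  have hposW : ∀ w ∈ W, w ∉ E → 0 < sigB v w := fun w hw hwE =>
    lt_of_le_of_ne (hv w hw) (fun h => hwE ((hE w).mpr ⟨hw, h.symm⟩))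
  set f : ((Fin dp ⊕ Fin dn) → ℝ) → ℝ := fun w => sigB v w / (|sigB v' w| + 1) with hf
  have hfpos : ∀ w ∈ W \ E, 0 < f w := by
    intro w hw
    rw [Finset.mem_sdiff] at hw
    exact div_pos (hposW w hw.1 hw.2) (by positivity)
  obtain ⟨δ, hδpos, hδle⟩ : ∃ δ : ℝ, 0 < δ ∧ ∀ w ∈ W \ E, δ ≤ f w := by
    by_cases hne : (W \ E).Nonempty
    · refine ⟨(W \ E).inf' hne f, ?_, fun w hw => Finset.inf'_le f hw⟩
      exact (Finset.lt_inf'_iff hne).mpr (fun w hw => hfpos w hw)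
    · exact ⟨1, one_pos, fun w hw => absurd ⟨w, hw⟩ hne⟩
  have key : ∀ t : ℝ, t ≠ 0 → |t| ≤ δ → t * c < 0 →
      v + t • v' ∈ polyCone W ∧ sigQ (v + t • v') < 0 := by
    intro t ht htδ htc
    constructor
    · intro w hw
      rw [sigB_add_left, sigB_smul_left]
      by_cases hwE : w ∈ E
      · rw [((hE w).mp hwE).2, hv'E w hwE]
        simp
      · have h1 : δ ≤ f w := hδle w (Finset.mem_sdiff.mpr ⟨hw, hwE⟩)
        have h2 : δ * (|sigB v' w| + 1) ≤ sigB v w := by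
          rw [hf] at h1; dsimp at h1
          rwa [le_div_iff₀ (by positivity)] at h1
        have h3 : |t * sigB v' w| ≤ sigB v w := by
          rw [abs_mul]
          calc |t| * |sigB v' w| ≤ δ * (|sigB v' w| + 1) := by
                apply mul_le_mul htδ (by linarith) (abs_nonneg _) (le_of_lt hδpos)
            _ ≤ sigB v w := h2
        have := neg_abs_le (t * sigB v' w)
        linarith [abs_nonneg (t * sigB v' w)]
    · have hq : sigQ (v + t • v') = t * c + t ^ 2 * sigQ v' := by
        have hvv : sigB v v = 0 := by
          have : sigB v v / 2 = 0 := hviso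
          linarith
        simp only [sigQ, sigB_add_left, sigB_smul_left]
        rw [sigB_comm v (v + t • v'), sigB_comm v' (v + t • v')]
        simp only [sigB_add_left, sigB_smul_left, hvv]
        rw [sigB_comm v' v]
        ring
      rw [hq]
      have ht2 : 0 < t ^ 2 := by positivity
      nlinarith
  rcases lt_or_gt_of_ne hvv' with hcneg | hcpos
  · refine ⟨δ, ne_of_gt hδpos, by nlinarith, ?_⟩
    exact key δ (ne_of_gt hδpos) (by rw [abs_of_pos hδpos]) (by nlinarith)
  · refine ⟨-δ, by simp [ne_of_gt hδpos], by nlinarith, ?_⟩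
    exact key (-δ) (by simp [ne_of_gt hδpos]) (by rw [abs_neg, abs_of_pos hδpos]) (by nlinarith)
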